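/- arXiv:1108.5881 — 5 statements merged into one kernel-verified Lean document; each statement's English description precedes it below -/
import Mathlib

section
/- The spread code constructed from the companion matrix P (codewords rs[B_0 ... B_{l-1}] with B_i ∈ F_q[P], first nonzero block equal to the identity) achieves the Singleton-like bound: it has cardinality (q^n − 1)/(q^k − 1) and minimum subspace distance 2k. -/
/-- The `k × k` companion matrix of a polynomial `p`. -/
def companionMatrix {F : Type*} [Field F] (p : Polynomial F) (k : ℕ) :
    Matrix (Fin k) (Fin k) F :=
  Matrix.of fun i j =>
    if (i : ℕ) + 1 = k then -p.coeff (j : ℕ)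
    else if (j : ℕ) = (i : ℕ) + 1 then 1 else 0

/-!
Write `L = F[X]/(p)`, a field with `q^k` elements. Since `e₀ Pⁱ = eᵢ` for `i < k`, a matrix
commuting with `P` is determined by its first row; this gives `p(P) = 0`, so `X ↦ P` defines an
embedding `σ : L → Mat_k(F)` with image `F[P]`, and the first-row map `a ↦ e₀ σ(a)` is an
`F`-linear bijection `L ≃ F^k`. Under this bijection `F^{kl} ≅ L^l`, and the row space of
`[σ b₀ | … | σ b_{l-1}]` becomes the `L`-line through `b = (b₀, …, b_{l-1})`, because
`e₀ σ(a) σ(bⱼ) = e₀ σ(a bⱼ)`. So the codewords are the points of `ℙ(L^l)`, each represented by the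
unique vector whose first nonzero entry is `1`: there are `(q^{kl} - 1)/(q^k - 1)` of them, two
distinct ones meet in `0`, and each has dimension `k` over `F`.
-/

open Function
open scoped LinearAlgebra.Projectivization

def IsLeadingOne {ι M : Type*} [LT ι] [Zero M] [One M] (b : ι → M) : Prop :=
  ∃ i, (∀ j < i, b j = 0) ∧ b i = 1

namespace IsLeadingOne

variable {ι : Type*} [LinearOrder ι]

lemma ne_zero {M : Type*} [Zero M] [One M] [NeZero (1 : M)] {b : ι → M}
    (hb : IsLeadingOne b) : b ≠ 0 := by
  obtain ⟨i, -, hi⟩ := hb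
  exact fun h => one_ne_zero (hi.symm.trans (congrFun h i))

lemma comp_iff {M N : Type*} [Zero M] [One M] [Zero N] [One N] {f : M → N} (hf : Injective f)
    (h0 : f 0 = 0) (h1 : f 1 = 1) {b : ι → M} : IsLeadingOne (f ∘ b) ↔ IsLeadingOne b := by
  simp only [IsLeadingOne, comp_apply, ← h0, ← h1, hf.eq_iff]

lemma eq_of_smul_eq {R : Type*} [Semiring R] [Nontrivial R] {b b' : ι → R}
    (hb : IsLeadingOne b) (hb' : IsLeadingOne b') {a : R} (h : a • b = b') : b = b' := by
  obtain ⟨i, hi0, hi1⟩ := hb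
  obtain ⟨i', hi0', hi1'⟩ := hb'
  have hval (j : ι) : a * b j = b' j := congrFun h j
  rcases lt_trichotomy i i' with hlt | rfl | hgt
  · have ha : a = 0 := by simpa [hi1, hi0' i hlt] using hval i
    simpa [ha, hi1'] using hval i'
  · have ha : a = 1 := by simpa [hi1, hi1'] using hval i
    simpa [ha] using h
  · simpa [hi0 i' hgt, hi1'] using hval i'

lemma eq_or_eq_zero_of_smul_eq_smul {K : Type*} [DivisionRing K] {b b' : ι → K}
    (hb : IsLeadingOne b) (hb' : IsLeadingOne b') {a a' : K} (h : a • b = a' • b') :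
    b = b' ∨ a = 0 := by
  refine or_iff_not_imp_right.mpr fun ha => (hb'.eq_of_smul_eq hb (a := a⁻¹ * a') ?_).symm
  rw [mul_smul, ← h, smul_smul, inv_mul_cancel₀ ha, one_smul]

lemma exists_smul {K : Type*} [DivisionRing K] [WellFoundedLT ι] {v : ι → K} (hv : v ≠ 0) :
    ∃ a : K, IsLeadingOne (a • v) := by
  obtain ⟨i, hi, hmin⟩ := wellFounded_lt.has_min {j | v j ≠ 0} (ne_iff.mp hv)
  refine ⟨(v i)⁻¹, i, fun j hj => ?_, inv_mul_cancel₀ hi⟩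
  simp [not_not.mp fun h => hmin j h hj]

end IsLeadingOne

lemma ncard_setOf_isLeadingOne {ι K : Type*} [LinearOrder ι] [Finite ι] [Field K] [Finite K] :
    {b : ι → K | IsLeadingOne b}.ncard = (Nat.card K ^ Nat.card ι - 1) / (Nat.card K - 1) := by
  let f : {b : ι → K // IsLeadingOne b} → ℙ K (ι → K) := fun b => .mk K b.1 b.2.ne_zero
  have hf : Bijective f := by
    refine ⟨fun b b' h => Subtype.ext ?_, fun x => ?_⟩
    · obtain ⟨a, ha⟩ := (Projectivization.mk_eq_mk_iff' K _ _ _ _).mp h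
      exact (b'.2.eq_of_smul_eq b.2 ha).symm
    · induction x using Projectivization.ind with | h v hv => ?_
      obtain ⟨a, ha⟩ := IsLeadingOne.exists_smul (K := K) hv
      exact ⟨⟨a • v, ha⟩, (Projectivization.mk_eq_mk_iff' K _ _ _ _).mpr ⟨a, rfl⟩⟩
  rw [← Nat.card_coe_set_eq, Set.coe_ofPred, Nat.card_eq_of_bijective f hf,
    Projectivization.card'', Nat.card_fun]

section LineImage

variable {ι F L W : Type*} [Field F] [Field L] [Algebra F L] [AddCommGroup W] [Module F W]
  (Φ : (ι → L) →ₗ[F] W)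

def lineImage (b : ι → L) : Submodule F W :=
  LinearMap.range (Φ ∘ₗ LinearMap.smulRight (LinearMap.id : L →ₗ[F] L) b)

instance [FiniteDimensional F L] (b : ι → L) : FiniteDimensional F (lineImage Φ b) :=
  LinearMap.finiteDimensional_range _

variable {Φ}

lemma mem_lineImage {b : ι → L} {x : W} : x ∈ lineImage Φ b ↔ ∃ a : L, Φ (a • b) = x := by
  simp [lineImage]

lemma finrank_lineImage (hΦ : Injective Φ) {b : ι → L} (hb : b ≠ 0) :
    Module.finrank F (lineImage Φ b) = Module.finrank F L :=
  LinearMap.finrank_range_of_inj (hΦ.comp (smul_left_injective L hb))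

variable [LinearOrder ι]

lemma lineImage_inf_eq_bot (hΦ : Injective Φ) {b b' : ι → L} (hb : IsLeadingOne b)
    (hb' : IsLeadingOne b') (hne : b ≠ b') : lineImage Φ b ⊓ lineImage Φ b' = ⊥ := by
  refine (Submodule.eq_bot_iff _).mpr fun x hx => ?_
  obtain ⟨⟨a, rfl⟩, ⟨a', ha'⟩⟩ := And.imp mem_lineImage.mp mem_lineImage.mp hx
  obtain h | rfl := hb.eq_or_eq_zero_of_smul_eq_smul hb' (hΦ ha').symm
  · exact absurd h hne
  · simp

lemma injOn_lineImage (hΦ : Injective Φ) :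
    Set.InjOn (lineImage Φ) {b : ι → L | IsLeadingOne b} := by
  intro b hb b' hb' h
  have hmem : Φ ((1 : L) • b) ∈ lineImage Φ b' := h ▸ mem_lineImage.mpr ⟨1, rfl⟩
  obtain ⟨a', ha'⟩ := mem_lineImage.mp hmem
  exact (hb'.eq_of_smul_eq hb (by simpa using hΦ ha')).symm

lemma finrank_sup_sub_finrank_inf_lineImage [FiniteDimensional F L] (hΦ : Injective Φ)
    {b b' : ι → L} (hb : IsLeadingOne b) (hb' : IsLeadingOne b') (hne : b ≠ b') :
    Module.finrank F ↥(lineImage Φ b ⊔ lineImage Φ b') -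
        Module.finrank F ↥(lineImage Φ b ⊓ lineImage Φ b') = 2 * Module.finrank F L := by
  have := Submodule.finrank_sup_add_finrank_inf_eq (lineImage Φ b) (lineImage Φ b')
  rw [lineImage_inf_eq_bot hΦ hb hb' hne, finrank_bot, finrank_lineImage hΦ hb.ne_zero,
    finrank_lineImage hΦ hb'.ne_zero] at *
  omega

end LineImage

section BlockRow

variable {ι n F L : Type*} [Fintype n] [DecidableEq n] [Field F] [Field L] [Algebra F L]
  (σ : L →ₐ[F] Matrix n n F) (i₀ : n)

def blockRow : (ι → L) →ₗ[F] (ι × n → F) where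
  toFun b jt := σ (b jt.1) i₀ jt.2
  map_add' _ _ := by ext; simp
  map_smul' _ _ := by ext; simp

variable {σ i₀}

lemma blockRow_injective (h : Injective fun a => σ a i₀) : Injective (blockRow (ι := ι) σ i₀) :=
  fun _ _ hbb' => funext fun j => h (funext fun t => congrFun hbb' (j, t))

lemma span_blockRows_eq_lineImage (h : Surjective fun a => σ a i₀) (b : ι → L) :
    Submodule.span F (Set.range fun i : n => fun jt : ι × n => σ (b jt.1) i jt.2)
      = lineImage (blockRow σ i₀) b := by
  let ψ : L →ₗ[F] (n → F) := (LinearMap.proj i₀ : Matrix n n F →ₗ[F] (n → F)) ∘ₗ σ.toLinearMap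
  let M : Matrix n (ι × n) F := .of fun i jt => σ (b jt.1) i jt.2
  have hψ : LinearMap.range ψ = ⊤ := LinearMap.range_eq_top.mpr h
  have hM : M.vecMulLinear ∘ₗ ψ = blockRow σ i₀ ∘ₗ LinearMap.smulRight LinearMap.id b := by
    ext a ⟨j, t⟩
    show ∑ i, σ a i₀ i * σ (b j) i t = σ (a * b j) i₀ t
    rw [map_mul, Matrix.mul_apply]
  rw [lineImage, ← hM, LinearMap.range_comp_of_range_eq_top _ hψ, _root_.range_vecMulLinear,
    Matrix.row]
  rfl

end BlockRow

open Polynomial Matrix Finset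

section Companion

variable {F : Type*} [Field F] {k : ℕ} (p : F[X])

lemma companionMatrix_row_of_succ_lt (i : Fin k) (h : (i : ℕ) + 1 < k) :
    companionMatrix p k i = Pi.single ⟨i + 1, h⟩ 1 := by
  ext j
  simp [companionMatrix, Pi.single_apply, h.ne', Fin.ext_iff, eq_comm]

lemma companionMatrix_row_of_succ_eq (i : Fin k) (h : (i : ℕ) + 1 = k) :
    companionMatrix p k i = fun j : Fin k => -p.coeff j := by
  ext j
  simp [companionMatrix, h]

variable [NeZero k]

lemma companionMatrix_pow_row_zero (i : Fin k) :
    (companionMatrix p k ^ (i : ℕ)) 0 = Pi.single i 1 := by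
  obtain ⟨m, hm⟩ := i
  induction m with
  | zero => ext j; simp [Matrix.one_apply, Pi.single_apply, eq_comm]
  | succ m ih =>
    rw [pow_succ, mul_apply_eq_vecMul, ih (by omega), single_one_vecMul, row,
      companionMatrix_row_of_succ_lt p _ hm]

lemma companionMatrix_pow_self_row_zero :
    (companionMatrix p k ^ k) 0 = fun j : Fin k => -p.coeff j := by
  obtain ⟨m, rfl⟩ : ∃ m, k = m + 1 := ⟨k - 1, (Nat.sub_add_cancel (NeZero.pos k)).symm⟩
  have h := companionMatrix_pow_row_zero p (Fin.last m)
  rw [Fin.val_last] at h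
  rw [pow_succ, mul_apply_eq_vecMul, h, single_one_vecMul, row,
    companionMatrix_row_of_succ_eq p _ rfl]

lemma eq_zero_of_commute_companionMatrix {M : Matrix (Fin k) (Fin k) F}
    (hM : Commute (companionMatrix p k) M) (h : M 0 = 0) : M = 0 := by
  funext i
  calc M i = (companionMatrix p k ^ (i : ℕ) * M) 0 := by
        rw [mul_apply_eq_vecMul, companionMatrix_pow_row_zero, single_one_vecMul, row]
    _ = (M * companionMatrix p k ^ (i : ℕ)) 0 := by rw [(hM.pow_left _).eq]
    _ = 0 := by rw [mul_apply_eq_vecMul, h, zero_vecMul]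

lemma aeval_companionMatrix_self (hmonic : p.Monic) (hdeg : p.natDegree = k) :
    aeval (companionMatrix p k) p = 0 := by
  refine eq_zero_of_commute_companionMatrix p
    (by simpa using (Commute.all X p).map (aeval (companionMatrix p k))) ?_
  have hlow : (aeval (companionMatrix p k) (∑ i ∈ range k, C (p.coeff i) * X ^ i)) 0
      = fun j : Fin k => p.coeff j := by
    ext j
    simp [Finset.sum_range, ← Algebra.smul_def, Matrix.sum_apply, companionMatrix_pow_row_zero,
      Pi.single_apply]
  have hp : p = X ^ k + ∑ i ∈ range k, C (p.coeff i) * X ^ i := hdeg ▸ hmonic.as_sum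
  calc (aeval (companionMatrix p k) p) 0
      = (aeval (companionMatrix p k) (X ^ k + ∑ i ∈ range k, C (p.coeff i) * X ^ i)) 0 :=
        congrArg (fun g => aeval (companionMatrix p k) g 0) hp
    _ = 0 := by
        funext j
        simp only [map_add, map_pow, aeval_X, Matrix.add_apply, congrFun hlow j,
          congrFun (companionMatrix_pow_self_row_zero p) j, neg_add_cancel, Pi.zero_apply]

variable {p} (hmonic : p.Monic) (hdeg : p.natDegree = k)

noncomputable def companionAlgHom : AdjoinRoot p →ₐ[F] Matrix (Fin k) (Fin k) F :=
  Ideal.Quotient.liftₐ _ (aeval (companionMatrix p k)) fun g hg => by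
    obtain ⟨c, rfl⟩ := Ideal.mem_span_singleton.mp hg
    rw [map_mul, aeval_companionMatrix_self p hmonic hdeg, zero_mul]

lemma companionAlgHom_root :
    companionAlgHom hmonic hdeg (AdjoinRoot.root p) = companionMatrix p k :=
  aeval_X _

lemma range_companionAlgHom :
    (companionAlgHom hmonic hdeg).range = Algebra.adjoin F {companionMatrix p k} := by
  rw [← companionAlgHom_root hmonic hdeg, ← AlgHom.map_adjoin_singleton,
    AdjoinRoot.adjoinRoot_eq_top, Algebra.map_top]

lemma bijective_companionAlgHom_row_zero [Fact (Irreducible p)] :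
    Bijective fun a => companionAlgHom hmonic hdeg a 0 := by
  set σ := companionAlgHom hmonic hdeg
  let ψ : AdjoinRoot p →ₗ[F] (Fin k → F) :=
    (LinearMap.proj 0 : Matrix (Fin k) (Fin k) F →ₗ[F] (Fin k → F)) ∘ₗ σ.toLinearMap
  have hinj : Injective ψ := by
    refine (injective_iff_map_eq_zero ψ).mpr fun a ha =>
      (map_eq_zero_iff σ σ.toRingHom.injective).mp ?_
    refine eq_zero_of_commute_companionMatrix p ?_ ha
    simpa [σ, companionAlgHom_root] using (Commute.all (AdjoinRoot.root p) a).map σ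
  have : Module.Finite F (AdjoinRoot p) := hmonic.finite_adjoinRoot
  have hfinrank : Module.finrank F (AdjoinRoot p) = Module.finrank F (Fin k → F) := by
    rw [Module.finrank_fin_fun, ← hdeg]
    exact finrank_quotient_span_eq_natDegree
  exact ⟨hinj, (ψ.injective_iff_surjective_of_finrank_eq_finrank hfinrank).mp hinj⟩

end Companion

theorem stmt7_general (q k l : ℕ) (F : Type*) [Field F] [Fintype F] (hq : Fintype.card F = q)
    (hk : 0 < k)
    (p : Polynomial F) (hmonic : p.Monic) (hirr : Irreducible p) (hdeg : p.natDegree = k)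
    (P : Matrix (Fin k) (Fin k) F) (hP : P = companionMatrix p k) :
    let C : Set (Submodule F (Fin l × Fin k → F)) :=
      {U | ∃ B : Fin l → Matrix (Fin k) (Fin k) F,
        (∀ j, B j ∈ Algebra.adjoin F ({P} : Set (Matrix (Fin k) (Fin k) F))) ∧
        (∃ j0 : Fin l, (∀ j, j < j0 → B j = 0) ∧ B j0 = 1) ∧
        U = Submodule.span F
          (Set.range fun i : Fin k => fun jt : Fin l × Fin k => B jt.1 i jt.2)}
    C.ncard = (q ^ (k * l) - 1) / (q ^ k - 1) ∧
      ∀ U ∈ C, ∀ V ∈ C, U ≠ V →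
        Module.finrank F ↥(U ⊔ V) - Module.finrank F ↥(U ⊓ V) = 2 * k := by
  intro C
  subst hP
  have : NeZero k := ⟨hk.ne'⟩
  have : Fact (Irreducible p) := ⟨hirr⟩
  set σ := companionAlgHom hmonic hdeg
  have hrow := bijective_companionAlgHom_row_zero hmonic hdeg
  have hΦ := blockRow_injective (ι := Fin l) hrow.1
  have hlead {b : Fin l → AdjoinRoot p} : IsLeadingOne (σ ∘ b) ↔ IsLeadingOne b :=
    IsLeadingOne.comp_iff σ.toRingHom.injective (map_zero σ) (map_one σ)
  have hC : C = lineImage (blockRow σ 0) '' {b | IsLeadingOne b} := by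
    ext U
    simp only [C, ← range_companionAlgHom hmonic hdeg, AlgHom.mem_range, Set.mem_ofPred_eq,
      Set.mem_image]
    constructor
    · rintro ⟨B, hB, hB1, rfl⟩
      choose b hb using hB
      obtain rfl : σ ∘ b = B := funext hb
      exact ⟨b, hlead.mp hB1, (span_blockRows_eq_lineImage hrow.2 b).symm⟩
    · rintro ⟨b, hb, rfl⟩
      exact ⟨σ ∘ b, fun j => ⟨b j, rfl⟩, hlead.mpr hb, (span_blockRows_eq_lineImage hrow.2 b).symm⟩
  have : Finite (AdjoinRoot p) := .of_injective _ hrow.1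
  rw [hC]
  refine ⟨?_, ?_⟩
  · rw [(injOn_lineImage hΦ).ncard_image, ncard_setOf_isLeadingOne,
      Nat.card_congr (Equiv.ofBijective _ hrow), Nat.card_fun, Nat.card_eq_fintype_card, hq,
      Nat.card_fin, Nat.card_fin, pow_mul]
  · rintro _ ⟨b, hb, rfl⟩ _ ⟨b', hb', rfl⟩ hne
    rw [finrank_sup_sub_finrank_inf_lineImage hΦ hb hb' (ne_of_apply_ne _ hne), ← hdeg]
    exact congrArg _ finrank_quotient_span_eq_natDegree

/-- The spread code constructed from the companion matrix `P` (codewords are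
row spaces of `[B_0 | … | B_{l-1}]` with `B_i ∈ F_q[P]` and first nonzero block the
identity) achieves the Singleton-like bound: it has cardinality `(q^n − 1)/(q^k − 1)`
(with `n = k·l`) and minimum subspace distance `2k`. -/
theorem stmt7 (q k l : ℕ) (F : Type*) [Field F] [Fintype F] (hq : Fintype.card F = q)
    (hk : 0 < k) (hl : 0 < l)
    (p : Polynomial F) (hmonic : p.Monic) (hirr : Irreducible p) (hdeg : p.natDegree = k)
    (P : Matrix (Fin k) (Fin k) F) (hP : P = companionMatrix p k) :
    let C : Set (Submodule F (Fin l × Fin k → F)) :=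
      {U | ∃ B : Fin l → Matrix (Fin k) (Fin k) F,
        (∀ j, B j ∈ Algebra.adjoin F ({P} : Set (Matrix (Fin k) (Fin k) F))) ∧
        (∃ j0 : Fin l, (∀ j, j < j0 → B j = 0) ∧ B j0 = 1) ∧
        U = Submodule.span F
          (Set.range fun i : Fin k => fun jt : Fin l × Fin k => B jt.1 i jt.2)}
    C.ncard = (q ^ (k * l) - 1) / (q ^ k - 1) ∧
      ∀ U ∈ C, ∀ V ∈ C, U ≠ V →
        Module.finrank F ↥(U ⊔ V) - Module.finrank F ↥(U ⊓ V) = 2 * k :=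
  stmt7_general q k l F hq hk p hmonic hirr hdeg P hP
end

section
/- Under the isomorphism φ = φ^(l) ∘ φ̃^(k), each spread codeword rs[B_0 | ... | B_{l-1}] with B_j ∈ {0} ∪ {P^h} maps to the one-dimensional F_{q^k}-subspace F_{q^k} · Σ_{j=0}^{l-1} γ_j β^j, where γ_j = 0 if B_j = 0 and γ_j = α^h if B_j = P^h. Hence each codeword is uniquely identified by γ = (γ_0,...,γ_{l-1}) ∈ F_{q^k}^l. -/
open Polynomial
open scoped Matrix

section CompanionMatrix

variable {F K : Type*} [Field F] [CommRing K] [Algebra F K]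

theorem sum_companionMatrix_smul_pow {p : F[X]} {k : ℕ} (hp : p.Monic) (hdeg : p.natDegree = k)
    {α : K} (hα : aeval α p = 0) (i : Fin k) :
    ∑ t : Fin k, companionMatrix p k i t • α ^ (t : ℕ) = α * α ^ (i : ℕ) := by
  rw [← pow_succ']
  by_cases hik : (i : ℕ) + 1 = k
  · have hcoeff : ∑ t : Fin k, p.coeff t • α ^ (t : ℕ) = -α ^ k := by
      rw [aeval_eq_sum_range, hdeg, Finset.sum_range_succ, ← hdeg, hp.coeff_natDegree, hdeg,
        one_smul, ← eq_neg_iff_add_eq_zero] at hα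
      rwa [Fin.sum_univ_eq_sum_range (fun n => p.coeff n • α ^ n)]
    simp only [companionMatrix, Matrix.of_apply, hik, if_true, neg_smul, Finset.sum_neg_distrib,
      hcoeff, neg_neg]
  · have hlt : (i : ℕ) + 1 < k := lt_of_le_of_ne i.2 hik
    rw [Finset.sum_eq_single ⟨(i : ℕ) + 1, hlt⟩]
    · simp [companionMatrix, hik]
    · intro t _ ht
      have : (t : ℕ) ≠ (i : ℕ) + 1 := fun h => ht (Fin.ext h)
      simp [companionMatrix, hik, this]
    · simp

end CompanionMatrix

section LeftMulMatrix

variable {R S ι : Type*} [CommRing R] [Ring S] [Algebra R S] [Fintype ι] [DecidableEq ι]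

theorem Algebra.transpose_leftMulMatrix_eq_of_sum_smul (b : Module.Basis ι R S)
    {A : Matrix ι ι R} {x : S}
    (hA : ∀ i, ∑ t, A i t • b t = x * b i) : (Algebra.leftMulMatrix b x)ᵀ = A := by
  ext i t
  rw [Matrix.transpose_apply, Algebra.leftMulMatrix_eq_repr_mul, ← hA, b.repr_sum_self]

theorem Matrix.sum_pow_apply_smul_eq_pow_mul (b : Module.Basis ι R S) {A : Matrix ι ι R} {x : S}
    (hA : ∀ i, ∑ t, A i t • b t = x * b i) (h : ℕ) (i : ι) :
    ∑ t, (A ^ h) i t • b t = x ^ h * b i := by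
  rw [← Algebra.transpose_leftMulMatrix_eq_of_sum_smul b hA, ← Matrix.transpose_pow, ← map_pow]
  simp only [Matrix.transpose_apply, Algebra.leftMulMatrix_eq_repr_mul, b.sum_repr]

end LeftMulMatrix

theorem Fintype.linearCombination_prod_smul {F K L ι κ : Type*} [Fintype ι] [Fintype κ]
    [CommSemiring F] [Semiring K] [AddCommMonoid L] [Module F K] [Module K L] [Module F L]
    [IsScalarTower F K L] (a : κ → K) (c : ι → L) (v : ι × κ → F) :
    Fintype.linearCombination F (fun jt : ι × κ => a jt.2 • c jt.1) v
      = ∑ j, (∑ i, v (j, i) • a i) • c j := by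
  simp only [Fintype.linearCombination_apply, Fintype.sum_prod_type, Finset.sum_smul, smul_assoc]

theorem Submodule.span_range_smul_eq_restrictScalars {F K L ι : Type*} [CommSemiring F]
    [Semiring K] [AddCommMonoid L] [Module F K] [Module K L] [Module F L] [IsScalarTower F K L]
    (b : Module.Basis ι F K) (s : L) :
    span F (Set.range fun i => b i • s) = (span K {s}).restrictScalars F := by
  rw [← span_smul_of_span_eq_top b.span_eq, Set.smul_singleton, ← Set.range_comp]
  rfl

/-- Under the isomorphism `φ = φ^(l) ∘ φ̃^(k)`, each spread codeword
`rs[B_0 | … | B_{l-1}]` with `B_j ∈ {0} ∪ {P^h}` maps exactly onto the one-dimensional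
`F_{q^k}`-subspace `F_{q^k} · ∑_j γ_j β^j`, where `γ_j = 0` if `B_j = 0` and `γ_j = α^h`
if `B_j = P^h`. -/
theorem stmt8 (k l : ℕ) (F K L : Type*) [Field F] [Field K] [Field L]
    [Algebra F K] [Algebra K L] [Algebra F L] [IsScalarTower F K L]
    (α : K) (bα : Module.Basis (Fin k) F K) (hbα : ∀ i : Fin k, bα i = α ^ (i : ℕ))
    (hdeg : (minpoly F α).natDegree = k)
    (P : Matrix (Fin k) (Fin k) F) (hP : P = companionMatrix (minpoly F α) k)
    (β : L)
    (B : Fin l → Matrix (Fin k) (Fin k) F) (γ : Fin l → K)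
    (hB : ∀ j, (B j = 0 ∧ γ j = 0) ∨ ∃ h : ℕ, B j = P ^ h ∧ γ j = α ^ h)
    (φ : (Fin l × Fin k → F) → L)
    (hφ : ∀ v, φ v = ∑ j : Fin l,
        algebraMap K L (∑ i : Fin k, algebraMap F K (v (j, i)) * α ^ (i : ℕ)) * β ^ (j : ℕ)) :
    φ '' (Submodule.span F
        (Set.range fun i : Fin k => fun jt : Fin l × Fin k => B jt.1 i jt.2) :
          Set (Fin l × Fin k → F))
      = (Submodule.span K {∑ j : Fin l, algebraMap K L (γ j) * β ^ (j : ℕ)} : Set L) := by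
  have hint : IsIntegral F α :=
    have := Module.Finite.of_basis bα
    Algebra.IsIntegral.isIntegral α
  have hProw : ∀ i, ∑ t, P i t • bα t = α * bα i := by
    simpa only [hP, hbα] using
      sum_companionMatrix_smul_pow (minpoly.monic hint) hdeg (minpoly.aeval F α)
  have hBrow : ∀ j i, ∑ t, B j i t • α ^ (t : ℕ) = α ^ (i : ℕ) * γ j := by
    intro j i
    rcases hB j with ⟨hB0, hγ0⟩ | ⟨h, hBh, hγh⟩
    · simp [hB0, hγ0]
    · simpa only [hBh, hγh, hbα, mul_comm] using Matrix.sum_pow_apply_smul_eq_pow_mul bα hProw h i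
  have hφψ : φ = Fintype.linearCombination F
      (fun jt : Fin l × Fin k => α ^ (jt.2 : ℕ) • β ^ (jt.1 : ℕ)) := by
    funext v
    rw [hφ, Fintype.linearCombination_prod_smul (F := F) (fun i : Fin k => α ^ (i : ℕ))
      (fun j : Fin l => β ^ (j : ℕ))]
    simp only [Algebra.smul_def]
  have hgen : ∀ i, φ (fun jt => B jt.1 i jt.2)
      = bα i • ∑ j : Fin l, algebraMap K L (γ j) * β ^ (j : ℕ) := by
    intro i
    rw [hφψ, Fintype.linearCombination_prod_smul (F := F) (fun i : Fin k => α ^ (i : ℕ))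
      (fun j : Fin l => β ^ (j : ℕ))]
    simp only [hBrow, hbα, Finset.smul_sum, mul_smul]
    simp only [Algebra.smul_def]
  rw [hφψ, ← Submodule.map_coe, Submodule.map_span, ← Set.range_comp, ← hφψ, Function.comp_def,
    funext hgen, Submodule.span_range_smul_eq_restrictScalars, Submodule.coe_restrictScalars]
end

section
/- Let R = U' ⊕ E where U' is a subspace of a codeword U ∈ G_q(k,n) and E is an error space of dimension f, with dim R = k' and basis r_1,...,r_{k'} of R. Then the set L = { Σ_{i∈I} λ_i r_i : λ_i ∈ F_q, I ⊂ {1,...,k'}, |I| = f+1 } contains k' − f linearly independent elements of U. -/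
/-!
Modulo `U'` the vectors `r i` span the image of `E`, of dimension at most `f`, so some `f` of
them, indexed by `J`, span all of them modulo `U'`: each `r i` is an element `u i ∈ U'` plus a
combination of the `r j`, `j ∈ J`. For `i ∉ J` the vector `u i` is then supported on
`insert i J`, of size at most `f + 1`, and the `u i` are linearly independent because modulo
the span of the `r j`, `j ∈ J`, they coincide with the independent vectors `r i`.
-/

open Submodule

section

variable {K V ι : Type*} [Field K] [AddCommGroup V] [Module K V]

theorem exists_finset_card_le_finrank_forall_mem_span_image [Finite ι] {v : ι → V}
    {W : Submodule K V} [FiniteDimensional K W] (hv : ∀ i, v i ∈ W) :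
    ∃ J : Finset ι, J.card ≤ Module.finrank K W ∧ ∀ i, v i ∈ span K (v '' J) := by
  obtain ⟨b, -, -, hspan, hind⟩ :=
    exists_linearIndepOn_extension (linearIndepOn_empty K v) (Set.subset_univ ∅)
  set J := (Set.toFinite b).toFinset
  have hJ : (J : Set ι) = b := Set.Finite.coe_toFinset _
  refine ⟨J, ?_, fun i => hJ ▸ hspan ⟨i, trivial, rfl⟩⟩
  calc J.card = Module.finrank K (span K (v '' J)) := by
        rw [Set.image_eq_range, finrank_span_eq_card (hJ ▸ hind)]; simp
    _ ≤ Module.finrank K W :=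
        finrank_mono (span_le.2 (Set.image_subset_iff.2 fun i _ => hv i))

theorem exists_finset_card_le_forall_mem_sup_span_image [Finite ι] {r : ι → V}
    {U E : Submodule K V} [FiniteDimensional K E] (hr : ∀ i, r i ∈ U ⊔ E) :
    ∃ J : Finset ι, J.card ≤ Module.finrank K E ∧ ∀ i, r i ∈ U ⊔ span K (r '' J) := by
  have hmem : ∀ i, U.mkQ (r i) ∈ E.map U.mkQ := fun i => by
    simpa [Submodule.map_sup] using mem_map_of_mem (f := U.mkQ) (hr i)
  obtain ⟨J, hJcard, hJ⟩ := exists_finset_card_le_finrank_forall_mem_span_image hmem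
  refine ⟨J, hJcard.trans (finrank_map_le _ _), fun i => ?_⟩
  rw [← comap_map_mkQ, mem_comap, map_span, Set.image_image]
  exact hJ i

theorem LinearIndependent.linearIndepOn_compl_of_sub_mem_span_image {r u : ι → V}
    (hr : LinearIndependent K r) {J : Set ι} (hu : ∀ i ∉ J, r i - u i ∈ span K (r '' J)) :
    LinearIndepOn K u Jᶜ := by
  have hquot : LinearIndepOn K ((span K (r '' J)).mkQ ∘ r) Jᶜ :=
    ((hr.linearIndepOn J).quotient_iff_union disjoint_compl_right).2 (by
      simpa using hr.linearIndepOn Set.univ)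
  refine (hquot.congr (w := _ ∘ u) fun i hi => ?_).of_comp (span K (r '' J)).mkQ
  simpa [eq_comm, Submodule.Quotient.eq] using hu i hi

theorem exists_finset_card_eq_sum_smul_of_mem_span_image [Fintype ι] {r : ι → V} {S : Finset ι}
    {y : V} (hy : y ∈ span K (r '' S)) {N : ℕ} (hSN : S.card ≤ N) (hN : N ≤ Fintype.card ι) :
    ∃ (I : Finset ι) (lam : ι → K), I.card = N ∧ y = ∑ i ∈ I, lam i • r i := by
  obtain ⟨I, hSI, hI⟩ := Finset.exists_superset_card_eq hSN hN
  obtain ⟨lam, hlam⟩ :=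
    (mem_span_image_finset_iff_exists_fun' K).1 (span_mono (Set.image_mono hSI) hy)
  exact ⟨I, lam, hI, hlam.symm⟩

end

theorem stmt11_general (n k' f : ℕ) (F : Type*) [Field F]
    (U U' E R : Submodule F (Fin n → F))
    (hU' : U' ≤ U)
    (hEf : Module.finrank F E = f) (hR : R = U' ⊔ E)
    (hf : f < k')
    (r : Fin k' → (Fin n → F))
    (hli : LinearIndependent F r) (hspan : Submodule.span F (Set.range r) = R) :
    ∃ s : Fin (k' - f) → (Fin n → F), LinearIndependent F s ∧
      ∀ m, s m ∈ U ∧ ∃ (I : Finset (Fin k')) (lam : Fin k' → F),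
        I.card = f + 1 ∧ s m = ∑ i ∈ I, lam i • r i := by
  obtain ⟨J, hJcard, hJ⟩ := exists_finset_card_le_forall_mem_sup_span_image
    fun i => hR ▸ hspan ▸ subset_span (Set.mem_range_self (f := r) i)
  choose u hu x hx hux using fun i => mem_sup.1 (hJ i)
  have hind : LinearIndepOn F u (J : Set (Fin k'))ᶜ :=
    hli.linearIndepOn_compl_of_sub_mem_span_image fun i _ => by simpa [← hux i] using hx i
  obtain ⟨C, hCJ, hC⟩ := Finset.exists_subset_card_eq (s := Jᶜ) (n := k' - f)
    (by rw [Finset.card_compl, Fintype.card_fin]; omega)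
  let e := C.orderEmbOfFin hC
  refine ⟨u ∘ e, ?_, fun m => ⟨hU' (hu _), ?_⟩⟩
  · refine (linearIndepOn_range_iff e.injective u).1 (hind.mono ?_)
    rintro _ ⟨m, rfl⟩
    simpa using hCJ (C.orderEmbOfFin_mem hC m)
  · have hmem : u (e m) ∈ span F (r '' ↑(insert (e m) J)) := by
      rw [← add_sub_cancel_right (u (e m)) (x (e m)), hux, Finset.coe_insert, Set.image_insert_eq]
      exact sub_mem (subset_span (Set.mem_insert _ _))
        (span_mono (Set.subset_insert _ _) (hx _))
    exact exists_finset_card_eq_sum_smul_of_mem_span_image hmem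
      ((Finset.card_insert_le _ _).trans (by omega)) (by rw [Fintype.card_fin]; omega)

/-- Let `R = U' ⊕ E` with `U' ⊆ U ∈ G_q(k,n)` and `dim E = f < k' = dim R`,
and let `r_1, …, r_{k'}` be a basis of `R`. Then the set
`L = { ∑_{i∈I} λ_i r_i : λ_i ∈ F_q, I ⊂ {1,…,k'}, |I| = f+1 }` contains `k' − f`
linearly independent elements of `U`. -/
theorem stmt11 (q n k k' f : ℕ) (F : Type*) [Field F] [Fintype F] (hq : Fintype.card F = q)
    (U U' E R : Submodule F (Fin n → F))
    (hUk : Module.finrank F U = k) (hU' : U' ≤ U)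
    (hEf : Module.finrank F E = f) (hdisj : U' ⊓ E = ⊥) (hR : R = U' ⊔ E)
    (hRk' : Module.finrank F R = k') (hf : f < k')
    (r : Fin k' → (Fin n → F))
    (hli : LinearIndependent F r) (hspan : Submodule.span F (Set.range r) = R) :
    ∃ s : Fin (k' - f) → (Fin n → F), LinearIndependent F s ∧
      ∀ m, s m ∈ U ∧ ∃ (I : Finset (Fin k')) (lam : Fin k' → F),
        I.card = f + 1 ∧ s m = ∑ i ∈ I, lam i • r i :=
  stmt11_general n k' f F U U' E R hU' hEf hR hf r hli hspan
end

section
/- Let R = U' ⊕ E with U' ⊆ U ∈ G_q(k,n), dim E = f, dim R = k', and suppose d_S(R,U) ≤ ⌊(2k−1)/2⌋. Then f ≤ (k'−1)/2, and the set of F_q-linear combinations of at most f+1 of the basis vectors r_1,...,r_{k'} of R contains at least ⌈(k'+1)/2⌉ linearly independent elements of U. -/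
/-!
A `d`-dimensional subspace `V` of `F^ι` projects isomorphically onto some `d` coordinates
(those whose coordinate functionals form a basis of the dual of `V`); the preimages of the unit
vectors there are `d` independent vectors of `V`, each supported on the other `|ι| - d`
coordinates plus one (reduced row echelon form). In coordinates with respect to `r`, this applies
to `R ∩ U = U'`, whose dimension `k' - f` is at least `⌈(k'+1)/2⌉` by the distance bound.
-/

open Module Finset

theorem Submodule.exists_linearIndependent_card_support_le {F ι : Type*} [Field F] [Fintype ι]
    (V : Submodule F (ι → F)) :
    ∃ x : Fin (finrank F V) → ι → F, LinearIndependent F x ∧ ∀ m, x m ∈ V ∧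
      ∃ I : Finset ι, #I ≤ Fintype.card ι - finrank F V + 1 ∧ ∀ i ∉ I, x m i = 0 := by
  classical
  set coord : ι → Dual F V := fun i => LinearMap.proj i ∘ₗ V.subtype
  obtain ⟨κ, a, ha, hspan, hli⟩ := exists_linearIndependent' F coord
  set π : V →ₗ[F] κ → F := LinearMap.pi fun j => coord (a j)
  have hπ : Function.Injective π := by
    rw [← LinearMap.ker_eq_bot, eq_bot_iff]
    intro v hv
    have hvanish : Submodule.span F (Set.range coord) ≤ LinearMap.ker (Dual.eval F V v) := by
      rw [← hspan, Submodule.span_le]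
      rintro _ ⟨j, rfl⟩
      exact congrFun hv j
    rw [Submodule.mem_bot]
    ext i
    exact hvanish (Submodule.subset_span ⟨i, rfl⟩)
  have : Fintype κ := Fintype.ofInjective a ha
  have hcard : Fintype.card κ = finrank F V := by
    refine le_antisymm ?_ ?_
    · simpa using hli.fintype_card_le_finrank
    · simpa using LinearMap.finrank_le_finrank_of_injective hπ
  set e : V ≃ₗ[F] κ → F := π.linearEquivOfInjective hπ (by simp [hcard])
  set σ : Fin (finrank F V) ≃ κ := (Fintype.equivFinOfCardEq hcard).symm
  refine ⟨fun m => e.symm (Pi.single (σ m) 1), ?_, fun m => ⟨Submodule.coe_mem _, ?_⟩⟩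
  · exact ((Pi.basisFun F κ).linearIndependent.comp σ σ.injective).map' _ e.symm.ker
      |>.map' V.subtype V.ker_subtype
  · refine ⟨(univ.image a)ᶜ ∪ {a (σ m)}, ?_, ?_⟩
    · calc #((univ.image a)ᶜ ∪ {a (σ m)}) ≤ #(univ.image a)ᶜ + 1 := card_union_le _ _
        _ = Fintype.card ι - finrank F V + 1 := by
          rw [card_compl, card_image_of_injective _ ha, card_univ, hcard]
    · intro i hi
      simp only [mem_union, mem_compl, mem_image, mem_univ, true_and, not_not, mem_singleton,
        not_or] at hi
      obtain ⟨⟨j, rfl⟩, hj⟩ := hi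
      have hcoord :
          (e.symm (Pi.single (σ m) 1) : ι → F) (a j) = (Pi.single (σ m) (1 : F) : κ → F) j :=
        congrFun (e.apply_symm_apply (Pi.single (σ m) 1)) j
      exact hcoord.trans (Pi.single_eq_of_ne (fun h => hj (congrArg a h)) _)

theorem Submodule.exists_linearIndependent_sum_card_le_of_le_span {F M ι : Type*} [Field F]
    [AddCommGroup M] [Module F M] [Fintype ι] {r : ι → M} (hr : LinearIndependent F r)
    {W : Submodule F M} (hW : W ≤ span F (Set.range r)) :
    ∃ x : Fin (finrank F W) → M, LinearIndependent F x ∧ ∀ m, x m ∈ W ∧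
      ∃ (I : Finset ι) (c : ι → F), #I ≤ Fintype.card ι - finrank F W + 1 ∧
        x m = ∑ i ∈ I, c i • r i := by
  set L := Fintype.linearCombination F r
  have hL : Function.Injective L := hr.fintypeLinearCombination_injective
  have hdim : finrank F (W.comap L) = finrank F W := by
    rw [(Submodule.equivMapOfInjective L hL _).finrank_eq,
      Submodule.map_comap_eq_of_le (by rwa [Fintype.range_linearCombination])]
  have hsparse := (W.comap L).exists_linearIndependent_card_support_le
  rw [hdim] at hsparse
  obtain ⟨x, hx, hxW⟩ := hsparse
  refine ⟨L ∘ x, hx.map' L (LinearMap.ker_eq_bot.mpr hL), fun m => ?_⟩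
  obtain ⟨hmem, I, hI, hzero⟩ := hxW m
  refine ⟨hmem, I, x m, hI, ?_⟩
  rw [Function.comp_apply, Fintype.linearCombination_apply]
  exact (sum_subset (subset_univ I) fun i _ hi => by rw [hzero i hi, zero_smul]).symm

theorem stmt12_general (n k k' f : ℕ) (F : Type*) [Field F]
    (hk : 0 < k)
    (U U' E R : Submodule F (Fin n → F))
    (hU' : U' ≤ U)
    (hEf : Module.finrank F E = f) (hdisj : U' ⊓ E = ⊥) (hUE : U ⊓ E = ⊥)
    (hR : R = U' ⊔ E) (hRk' : Module.finrank F R = k')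
    (r : Fin k' → (Fin n → F))
    (hli : LinearIndependent F r) (hspan : Submodule.span F (Set.range r) = R)
    (hdec : k + k' - 2 * Module.finrank F ↥(R ⊓ U) ≤ k - 1) :
    2 * f + 1 ≤ k' ∧
      ∃ s : Fin ((k' + 2) / 2) → (Fin n → F), LinearIndependent F s ∧
        ∀ m, s m ∈ U ∧ ∃ (I : Finset (Fin k')) (lam : Fin k' → F),
          I.card ≤ f + 1 ∧ s m = ∑ i ∈ I, lam i • r i := by
  have hRU : R ⊓ U = U' := by
    rw [hR, sup_inf_assoc_of_le _ hU', inf_comm E U, hUE, sup_bot_eq]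
  have hdimR : finrank F U' + f = k' := by
    have := Submodule.finrank_sup_add_finrank_inf_eq U' E
    rwa [hdisj, finrank_bot, ← hR, hRk', hEf, add_zero, eq_comm] at this
  rw [hRU] at hdec
  have hf : 2 * f + 1 ≤ k' := by omega
  obtain ⟨x, hx, hxU'⟩ := Submodule.exists_linearIndependent_sum_card_le_of_le_span hli
    (hspan ▸ hR ▸ le_sup_left : U' ≤ Submodule.span F (Set.range r))
  have hlen : (k' + 2) / 2 ≤ finrank F U' := by omega
  refine ⟨hf, x ∘ Fin.castLE hlen, hx.comp _ (Fin.castLE_injective hlen), fun m => ?_⟩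
  obtain ⟨hmem, I, c, hI, hsum⟩ := hxU' (Fin.castLE hlen m)
  refine ⟨hU' hmem, I, c, ?_, hsum⟩
  rw [Fintype.card_fin] at hI
  omega

/-- Let `R = U' ⊕ E` with `U' ⊆ U ∈ G_q(k,n)`, `dim E = f`, `dim R = k'`,
and suppose `d_S(R,U) = k + k' − 2 dim(R∩U) ≤ ⌊(2k−1)/2⌋ = k−1`. Then `f ≤ (k'−1)/2`,
and the set of `F_q`-linear combinations of at most `f+1` of the basis vectors
`r_1, …, r_{k'}` of `R` contains at least `⌈(k'+1)/2⌉` linearly independent elements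
of `U`. -/
theorem stmt12 (q n k k' f : ℕ) (F : Type*) [Field F] [Fintype F] (hq : Fintype.card F = q)
    (hk : 0 < k)
    (U U' E R : Submodule F (Fin n → F))
    (hUk : Module.finrank F U = k) (hU' : U' ≤ U)
    (hEf : Module.finrank F E = f) (hdisj : U' ⊓ E = ⊥) (hUE : U ⊓ E = ⊥)
    (hR : R = U' ⊔ E) (hRk' : Module.finrank F R = k')
    (r : Fin k' → (Fin n → F))
    (hli : LinearIndependent F r) (hspan : Submodule.span F (Set.range r) = R)
    (hdec : k + k' - 2 * Module.finrank F ↥(R ⊓ U) ≤ k - 1) :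
    2 * f + 1 ≤ k' ∧
      ∃ s : Fin ((k' + 2) / 2) → (Fin n → F), LinearIndependent F s ∧
        ∀ m, s m ∈ U ∧ ∃ (I : Finset (Fin k')) (lam : Fin k' → F),
          I.card ≤ f + 1 ∧ s m = ∑ i ∈ I, lam i • r i :=
  stmt12_general n k k' f F hk U U' E R hU' hEf hdisj hUE hR hRk' r hli hspan hdec
end

section
/- Let U be a spread codeword with identifier γ = (γ_0,...,γ_{l-1}) and j' = min{j : γ_j ≠ 0}. Let R have a basis r_1,...,r_{k'} in reduced row echelon form, partitioned into sets B_j = {r_i : r_{i,t} = 0 for all t < j and r_{i,j} ≠ 0} (blocks of length k). If d_S(U,R) ≤ k−1, then U ∩ R ⊆ span(∪_{j=j'}^{l-1} B_j) and |B_{j'}| ≥ ⌈(k'−1)/2⌉. -/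
/-!
Identify each block of `k` coordinates with an element of `K = 𝔽_{q^k}` through the power basis
of `α`. A vector lies in the spread codeword `U` exactly when its tuple of blocks is a
`K`-multiple `c • γ`, so its blocks before `j'` vanish, and it is zero as soon as its block `j'`
vanishes. A vector `v` of `R` is `∑ v (ρ i) • r i`; for `v ∈ U ∩ R` the coefficients at pivots
in blocks before `j'` are therefore zero. Moreover `v ↦ (v (ρ i))_{i ∈ B_{j'}}` is injective on
`U ∩ R`: if it vanishes, the pivots before block `j'` see zero entries of `v` and the rows
pivoting after block `j'` vanish on block `j'`, so block `j'` of `v` is zero and `v = 0`. Hence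
`dim (U ∩ R) ≤ |B_{j'}|`, and the distance bound `k + k' - 2 dim (U ∩ R) ≤ k - 1` turns this
into `|B_{j'}| ≥ ⌈(k' - 1)/2⌉`.
-/

open Module Submodule Set

namespace Module.Basis

variable {ι R A : Type*} [Fintype ι] [CommRing R] [Ring A] [Algebra R A] (b : Basis ι R A)

theorem sum_algebraMap_mul_eq_equivFun_symm (x : ι → R) :
    ∑ i, algebraMap R A (x i) * b i = b.equivFun.symm x := by
  simp [Basis.equivFun_symm_apply, Algebra.smul_def]

theorem sum_algebraMap_mul_eq_zero_iff {x : ι → R} :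
    ∑ i, algebraMap R A (x i) * b i = 0 ↔ x = 0 := by
  rw [sum_algebraMap_mul_eq_equivFun_symm, LinearEquiv.map_eq_zero_iff]

theorem exists_eq_smul_of_sum_algebraMap_mul_mem_span_singleton {x g : ι → R}
    (h : ∑ i, algebraMap R A (x i) * b i ∈ R ∙ ∑ i, algebraMap R A (g i) * b i) :
    ∃ c : R, x = c • g := by
  obtain ⟨c, hc⟩ := mem_span_singleton.mp h
  refine ⟨c, b.equivFun.symm.injective ?_⟩
  simpa only [sum_algebraMap_mul_eq_equivFun_symm, map_smul] using hc.symm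

end Module.Basis

section SpreadCode

variable {F K : Type*} [Field F] [Field K] [Algebra F K] {k l : ℕ}

def blockValue (α : K) (v : Fin l × Fin k → F) (j : Fin l) : K :=
  ∑ i : Fin k, algebraMap F K (v (j, i)) * α ^ (i : ℕ)

variable {α : K} {bα : Basis (Fin k) F K} (hbα : ∀ i : Fin k, bα i = α ^ (i : ℕ))
  {v : Fin l × Fin k → F} {c : K} {γ : Fin l → K}
include hbα

theorem blockValue_eq_zero_iff {j : Fin l} : blockValue α v j = 0 ↔ ∀ i, v (j, i) = 0 := by
  simp_rw [blockValue, ← hbα, bα.sum_algebraMap_mul_eq_zero_iff, funext_iff, Pi.zero_apply]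

theorem apply_eq_zero_of_blockValue_eq_smul (hv : blockValue α v = c • γ) {p : Fin l × Fin k}
    (hγ : γ p.1 = 0) : v p = 0 :=
  (blockValue_eq_zero_iff hbα).mp (by simp [hv, hγ]) p.2

theorem eq_zero_of_blockValue_eq_smul (hv : blockValue α v = c • γ) {j : Fin l} (hγ : γ j ≠ 0)
    (hvj : ∀ i, v (j, i) = 0) : v = 0 := by
  have hc : c = 0 := by
    have hzero := (blockValue_eq_zero_iff hbα).mpr hvj
    rw [hv, Pi.smul_apply, smul_eq_mul] at hzero
    exact (mul_eq_zero.mp hzero).resolve_right hγ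
  funext p
  exact (blockValue_eq_zero_iff hbα).mp (by simp [hv, hc]) p.2

end SpreadCode

section Echelon

variable {ι X F : Type*} [Fintype ι] [CommSemiring F] {r : ι → X → F} {ρ : ι → X}
  (hpiv1 : ∀ i, r i (ρ i) = 1) (hpiv0 : ∀ i i', i ≠ i' → r i' (ρ i) = 0)
  {v : X → F}
include hpiv1 hpiv0

theorem eq_sum_apply_pivot_smul_of_mem_span (hv : v ∈ span F (range r)) :
    v = ∑ i, v (ρ i) • r i := by
  obtain ⟨a, rfl⟩ := (mem_span_range_iff_exists_fun F).mp hv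
  refine Finset.sum_congr rfl fun i _ => congrArg (· • r i) ?_
  rw [Finset.sum_apply, Finset.sum_eq_single i (fun i' _ hi' => by simp [hpiv0 i i' hi'.symm])
    (by simp), Pi.smul_apply, hpiv1, smul_eq_mul, mul_one]

theorem mem_span_image_of_apply_pivot_eq_zero (hv : v ∈ span F (range r)) {P : ι → Prop}
    (hzero : ∀ i, ¬ P i → v (ρ i) = 0) : v ∈ span F (r '' {i | P i}) := by
  rw [eq_sum_apply_pivot_smul_of_mem_span hpiv1 hpiv0 hv]
  refine sum_mem fun i _ => ?_
  by_cases hi : P i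
  · exact smul_mem _ _ (subset_span ⟨i, hi, rfl⟩)
  · simp [hzero i hi]

end Echelon

theorem apply_eq_zero_of_apply_pivot_block_eq_zero {ι J κ F : Type*} [Fintype ι] [CommSemiring F] [LinearOrder J]
    {r : ι → J × κ → F} {ρ : ι → J × κ} (hpiv1 : ∀ i, r i (ρ i) = 1)
    (hpiv0 : ∀ i i', i ≠ i' → r i' (ρ i) = 0)
    (hlead : ∀ i p, p.1 < (ρ i).1 → r i p = 0) {v : J × κ → F} (hv : v ∈ span F (range r))
    {j : J} (hlow : ∀ p : J × κ, p.1 < j → v p = 0) (hblock : ∀ i, (ρ i).1 = j → v (ρ i) = 0)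
    (t : κ) : v (j, t) = 0 := by
  rw [eq_sum_apply_pivot_smul_of_mem_span hpiv1 hpiv0 hv, Finset.sum_apply]
  refine Finset.sum_eq_zero fun i _ => ?_
  rcases lt_trichotomy (ρ i).1 j with h | h | h
  · simp [hlow _ h]
  · simp [hblock i h]
  · simp [hlead i (j, t) h]

theorem Submodule.finrank_le_card_of_eq_zero_of_apply_eq_zero {ι X F : Type*} [Field F]
    {W : Submodule F (X → F)} (ρ : ι → X) (s : Finset ι)
    (h : ∀ v ∈ W, (∀ i ∈ s, v (ρ i) = 0) → v = 0) : finrank F W ≤ s.card := by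
  let restrict : W →ₗ[F] (s → F) := (LinearMap.funLeft F F fun i : s => ρ i) ∘ₗ W.subtype
  have hinj : Function.Injective restrict := by
    refine (injective_iff_map_eq_zero restrict).mpr fun v hv => Subtype.ext ?_
    exact h v v.2 fun i hi => congrFun hv ⟨i, hi⟩
  simpa using LinearMap.finrank_le_finrank_of_injective hinj

theorem Fin.val_mul_add_val_lt_of_fst_lt {l k : ℕ} {p p' : Fin l × Fin k} (h : p.1 < p'.1) :
    (p.1 : ℕ) * k + p.2 < (p'.1 : ℕ) * k + p'.2 := by
  have hle : ((p.1 : ℕ) + 1) * k ≤ (p'.1 : ℕ) * k := Nat.mul_le_mul_right k h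
  have := p.2.isLt
  nlinarith

theorem stmt13_general (k l k' : ℕ) (F K L : Type*) [Field F] [Field K] [Field L]
    [Algebra F K] [Algebra K L] [Algebra F L]
    (α : K) (bα : Module.Basis (Fin k) F K) (hbα : ∀ i : Fin k, bα i = α ^ (i : ℕ))
    (β : L) (bβ : Module.Basis (Fin l) K L) (hbβ : ∀ j : Fin l, bβ j = β ^ (j : ℕ))
    (φ : (Fin l × Fin k → F) →ₗ[F] L)
    (hφ : ∀ v, φ v = ∑ j : Fin l,
        algebraMap K L (∑ i : Fin k, algebraMap F K (v (j, i)) * α ^ (i : ℕ)) * β ^ (j : ℕ))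
    (γ : Fin l → K) (j' : Fin l) (hj'ne : γ j' ≠ 0) (hj'min : ∀ j, j < j' → γ j = 0)
    (U R : Submodule F (Fin l × Fin k → F))
    (hU : ∀ v, v ∈ U ↔
        φ v ∈ Submodule.span K {∑ j : Fin l, algebraMap K L (γ j) * β ^ (j : ℕ)})
    (r : Fin k' → (Fin l × Fin k → F))
    (hspan : Submodule.span F (Set.range r) = R)
    (ρ : Fin k' → Fin l × Fin k)
    (hpiv1 : ∀ i, r i (ρ i) = 1)
    (hpiv0 : ∀ i i', i ≠ i' → r i' (ρ i) = 0)
    (hlead : ∀ i p, (p.1 : ℕ) * k + (p.2 : ℕ) < ((ρ i).1 : ℕ) * k + ((ρ i).2 : ℕ) →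
      r i p = 0)
    (hdec : k + k' - 2 * Module.finrank F ↥(U ⊓ R) ≤ k - 1) :
    U ⊓ R ≤ Submodule.span F (r '' {i | j' ≤ (ρ i).1}) ∧
      (k' - 1 + 1) / 2 ≤ (Finset.univ.filter fun i => (ρ i).1 = j').card := by
  have hblocks : ∀ v ∈ U, ∃ c : K, blockValue α v = c • γ := fun v hv => by
    rw [hU, hφ] at hv
    simp_rw [← hbβ] at hv
    exact bβ.exists_eq_smul_of_sum_algebraMap_mul_mem_span_singleton hv
  have hlow : ∀ v ∈ U, ∀ p : Fin l × Fin k, p.1 < j' → v p = 0 := fun v hv p hp =>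
    (hblocks v hv).elim fun _ hc => apply_eq_zero_of_blockValue_eq_smul hbα hc (hj'min _ hp)
  have hR : ∀ i p, p.1 < (ρ i).1 → r i p = 0 := fun i p hp =>
    hlead i p (Fin.val_mul_add_val_lt_of_fst_lt hp)
  refine ⟨fun v ⟨hvU, hvR⟩ => ?_, ?_⟩
  · exact mem_span_image_of_apply_pivot_eq_zero hpiv1 hpiv0 (hspan ▸ hvR)
      fun i hi => hlow v hvU _ (not_le.mp hi)
  · have hdim := (U ⊓ R).finrank_le_card_of_eq_zero_of_apply_eq_zero ρ
      (Finset.univ.filter fun i => (ρ i).1 = j') fun v ⟨hvU, hvR⟩ hpiv => by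
        obtain ⟨c, hc⟩ := hblocks v hvU
        exact eq_zero_of_blockValue_eq_smul hbα hc hj'ne <|
          apply_eq_zero_of_apply_pivot_block_eq_zero hpiv1 hpiv0 hR (hspan ▸ hvR) (hlow v hvU)
            fun i hi => hpiv i (by simpa using hi)
    omega

/-- Let `U` be a spread codeword with identifier `γ = (γ_0,…,γ_{l-1})` and
`j' = min{j : γ_j ≠ 0}`. Let `R` have a basis `r_1,…,r_{k'}` in reduced row echelon form
(pivot positions `ρ i`, each vector split into `l` blocks of length `k`), partitioned into
sets `B_j = {r_i : the leading block of r_i is block j}`. If `d_S(U,R) ≤ k−1`, then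
`U ∩ R ⊆ span(⋃_{j≥j'} B_j)` and `|B_{j'}| ≥ ⌈(k'−1)/2⌉`. -/
theorem stmt13 (q k l k' : ℕ) (F K L : Type*) [Field F] [Fintype F] [Field K] [Field L]
    [Algebra F K] [Algebra K L] [Algebra F L] [IsScalarTower F K L]
    (hq : Fintype.card F = q) (hkpos : 0 < k)
    (α : K) (bα : Module.Basis (Fin k) F K) (hbα : ∀ i : Fin k, bα i = α ^ (i : ℕ))
    (β : L) (bβ : Module.Basis (Fin l) K L) (hbβ : ∀ j : Fin l, bβ j = β ^ (j : ℕ))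
    (φ : (Fin l × Fin k → F) →ₗ[F] L)
    (hφ : ∀ v, φ v = ∑ j : Fin l,
        algebraMap K L (∑ i : Fin k, algebraMap F K (v (j, i)) * α ^ (i : ℕ)) * β ^ (j : ℕ))
    (γ : Fin l → K) (j' : Fin l) (hj'ne : γ j' ≠ 0) (hj'min : ∀ j, j < j' → γ j = 0)
    (U R : Submodule F (Fin l × Fin k → F))
    (hU : ∀ v, v ∈ U ↔
        φ v ∈ Submodule.span K {∑ j : Fin l, algebraMap K L (γ j) * β ^ (j : ℕ)})
    (hUk : Module.finrank F U = k) (hRk' : Module.finrank F R = k')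
    (r : Fin k' → (Fin l × Fin k → F))
    (hli : LinearIndependent F r) (hspan : Submodule.span F (Set.range r) = R)
    (ρ : Fin k' → Fin l × Fin k)
    (hpiv1 : ∀ i, r i (ρ i) = 1)
    (hpiv0 : ∀ i i', i ≠ i' → r i' (ρ i) = 0)
    (hlead : ∀ i p, (p.1 : ℕ) * k + (p.2 : ℕ) < ((ρ i).1 : ℕ) * k + ((ρ i).2 : ℕ) →
      r i p = 0)
    (hmono : StrictMono fun i => ((ρ i).1 : ℕ) * k + ((ρ i).2 : ℕ))
    (hdec : k + k' - 2 * Module.finrank F ↥(U ⊓ R) ≤ k - 1) :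
    U ⊓ R ≤ Submodule.span F (r '' {i | j' ≤ (ρ i).1}) ∧
      (k' - 1 + 1) / 2 ≤ (Finset.univ.filter fun i => (ρ i).1 = j').card :=
  stmt13_general k l k' F K L α bα hbα β bβ hbβ φ hφ γ j' hj'ne hj'min U R hU r hspan ρ hpiv1 hpiv0
    hlead hdec
end
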